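/- arXiv:1804.09519 — 2 statements merged into one kernel-verified Lean document; each statement's English description precedes it below -/
import Mathlib

section
/- Let F be a field, let k be a natural number and set n = 2k+1. Suppose given families of finite-dimensional F-vector spaces (A_j), (B_j), (C_j) indexed by j ∈ ℤ, all of which are zero unless 0 ≤ j ≤ n, together with linear maps ∂_j : A_j → B_{j-1}, i_j : B_j → C_j, p_j : C_j → A_j which form a long exact sequence ⋯ → A_{j+1} --∂_{j+1}--> B_j --i_j--> C_j --p_j--> A_j --∂_j--> B_{j-1} → ⋯ (exact at every term). Assume the duality conditions dim A_j = dim C_{n-j} for all j and dim B_j = dim B_{n-1-j} for all j. Then dim ker(i_k : B_k → C_k) = (1/2) · dim B_k. -/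
/-!
Write `x j`, `y j` for the ranks of `∂_{j+1}` and `i_j`, and `n = 2k + 1`. Exactness splits each
space of the sequence into the image of the incoming map and the image of the outgoing one, so
`dim B_j = x j + y j`, and similarly for `A_j` and `C_j`. Feeding these into the two duality
conditions and cancelling the ranks of the `p`'s gives the recursion
`x (n - m) + x (n - m - 1) = y (m - 1) + y m`. Since `x n = 0 = y (-1)`, induction on `m` yields
`x (n - m) = y (m - 1)`, in particular `x k = y k`, whence `dim B_k = 2 x k = 2 dim ker i_k`.
-/

open Module LinearMap

theorem finrank_eq_finrank_range_add_finrank_range_of_range_eq_ker {K U V W : Type*}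
    [DivisionRing K] [AddCommGroup U] [Module K U] [AddCommGroup V] [Module K V]
    [FiniteDimensional K V] [AddCommGroup W] [Module K W]
    (f : U →ₗ[K] V) (g : V →ₗ[K] W) (h : range f = ker g) :
    finrank K V = finrank K (range f) + finrank K (range g) := by
  rw [← g.finrank_range_add_finrank_ker, h, add_comm]

theorem LinearMap.finrank_range_eq_zero_of_subsingleton {K U V : Type*} [DivisionRing K]
    [AddCommGroup U] [Module K U] [Subsingleton U] [AddCommGroup V] [Module K V]
    (f : U →ₗ[K] V) : finrank K (range f) = 0 :=
  Nat.eq_zero_of_le_zero (f.finrank_range_le.trans_eq finrank_zero_of_subsingleton)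

theorem eq_of_add_succ_eq_add_succ {M : Type*} [Add M] [IsLeftCancelAdd M] {u v : ℤ → M}
    {a : ℤ} (ha : u a = v a) (h : ∀ m, u m + u (m + 1) = v m + v (m + 1)) {m : ℤ}
    (hm : a ≤ m) : u m = v m := by
  induction m, hm using Int.leInduction with
  | base => exact ha
  | succ m _ ih => exact add_left_cancel ((h m).trans (by rw [ih]))

section LongExactSequence

variable {K : Type*} [DivisionRing K] {A B C : ℤ → Type*}
  [∀ j, AddCommGroup (A j)] [∀ j, Module K (A j)] [∀ j, FiniteDimensional K (A j)]
  [∀ j, AddCommGroup (B j)] [∀ j, Module K (B j)] [∀ j, FiniteDimensional K (B j)]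
  [∀ j, AddCommGroup (C j)] [∀ j, Module K (C j)] [∀ j, FiniteDimensional K (C j)]
  (d : ∀ j : ℤ, A (j + 1) →ₗ[K] B j) (i : ∀ j : ℤ, B j →ₗ[K] C j) (p : ∀ j : ℤ, C j →ₗ[K] A j)

theorem finrank_range_add_finrank_range_eq_of_duality (n m : ℤ)
    (hexB : ∀ j : ℤ, range (d j) = ker (i j))
    (hexC : ∀ j : ℤ, range (i j) = ker (p j))
    (hexA : ∀ j : ℤ, range (p (j + 1)) = ker (d j))
    (hdualAC : ∀ j : ℤ, finrank K (A j) = finrank K (C (n - j)))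
    (hdualB : ∀ j : ℤ, finrank K (B j) = finrank K (B (n - 1 - j))) :
    finrank K (range (d (n - m))) + finrank K (range (d (n - 1 - m))) =
      finrank K (range (i (m - 1))) + finrank K (range (i m)) := by
  -- The domain `A (j + 1)` of `d j` is not syntactically `A (n - m)`: keep the index free and `subst`.
  have hexA_finrank (j j' : ℤ) (h : j + 1 = j') :
      finrank K (A j') = finrank K (range (p j')) + finrank K (range (d j)) := by
    subst h
    exact finrank_eq_finrank_range_add_finrank_range_of_range_eq_ker _ _ (hexA j)
  have hA₁ := hexA_finrank (n - 1 - m) (n - m) (by ring)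
  have hA₂ := hexA_finrank (m - 1) m (by ring)
  have hB₁ := finrank_eq_finrank_range_add_finrank_range_of_range_eq_ker _ _ (hexB (n - m))
  have hB₂ := finrank_eq_finrank_range_add_finrank_range_of_range_eq_ker _ _ (hexB (m - 1))
  have hC₁ := finrank_eq_finrank_range_add_finrank_range_of_range_eq_ker _ _ (hexC (n - m))
  have hC₂ := finrank_eq_finrank_range_add_finrank_range_of_range_eq_ker _ _ (hexC m)
  have hAC₁ := hdualAC (n - m)
  rw [sub_sub_cancel] at hAC₁
  have hAC₂ := hdualAC m
  have hBB := hdualB (n - m)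
  rw [show n - 1 - (n - m) = m - 1 by ring] at hBB
  omega

end LongExactSequence

theorem stmt0_general (F : Type*) [Field F] (k : ℕ)
    (A B C : ℤ → Type*)
    [∀ j, AddCommGroup (A j)] [∀ j, Module F (A j)] [∀ j, FiniteDimensional F (A j)]
    [∀ j, AddCommGroup (B j)] [∀ j, Module F (B j)] [∀ j, FiniteDimensional F (B j)]
    [∀ j, AddCommGroup (C j)] [∀ j, Module F (C j)] [∀ j, FiniteDimensional F (C j)]
    (hA : ∀ j : ℤ, (j < 0 ∨ (2 * k + 1 : ℤ) < j) → Subsingleton (A j))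
    (hB : ∀ j : ℤ, (j < 0 ∨ (2 * k + 1 : ℤ) < j) → Subsingleton (B j))
    (d : ∀ j : ℤ, A (j + 1) →ₗ[F] B j)
    (i : ∀ j : ℤ, B j →ₗ[F] C j)
    (p : ∀ j : ℤ, C j →ₗ[F] A j)
    (hexB : ∀ j : ℤ, LinearMap.range (d j) = LinearMap.ker (i j))
    (hexC : ∀ j : ℤ, LinearMap.range (i j) = LinearMap.ker (p j))
    (hexA : ∀ j : ℤ, LinearMap.range (p (j + 1)) = LinearMap.ker (d j))
    (hdualAC : ∀ j : ℤ,
      Module.finrank F (A j) = Module.finrank F (C (2 * k + 1 - j)))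
    (hdualB : ∀ j : ℤ,
      Module.finrank F (B j) = Module.finrank F (B (2 * k - j))) :
    2 * Module.finrank F (LinearMap.ker (i k)) = Module.finrank F (B (k : ℤ)) := by
  set n : ℤ := 2 * k + 1
  set x : ℤ → ℕ := fun j ↦ finrank F (range (d j))
  set y : ℤ → ℕ := fun j ↦ finrank F (range (i j))
  have hrecursion (m : ℤ) : x (n - m) + x (n - 1 - m) = y (m - 1) + y m :=
    finrank_range_add_finrank_range_eq_of_duality d i p n m hexB hexC hexA hdualAC
      (fun j ↦ by rw [hdualB, show n - 1 - j = 2 * k - j by ring])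
  have hx : x n = 0 :=
    have : Subsingleton (A (n + 1)) := hA _ (Or.inr (by omega))
    finrank_range_eq_zero_of_subsingleton _
  have hy : y (-1) = 0 :=
    have : Subsingleton (B (-1)) := hB _ (Or.inl (by omega))
    finrank_range_eq_zero_of_subsingleton _
  have hmiddle : x (n - (k + 1)) = y (k + 1 - 1) :=
    eq_of_add_succ_eq_add_succ (u := fun m ↦ x (n - m)) (v := fun m ↦ y (m - 1)) (a := 0)
      (by simp only [sub_zero, zero_sub, hx, hy])
      (fun m ↦ by simpa only [sub_add_eq_sub_sub_swap, add_sub_cancel_right] using hrecursion m)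
      (by omega)
  rw [show n - (k + 1) = k by ring, add_sub_cancel_right] at hmiddle
  rw [← hexB, finrank_eq_finrank_range_add_finrank_range_of_range_eq_ker _ _ (hexB k)]
  change 2 * x k = x k + y k
  omega

/-- Linear-algebra content of the "half lives, half dies" lemma:
given a long exact sequence ⋯ → A_{j+1} → B_j → C_j → A_j → B_{j-1} → ⋯ of
finite-dimensional `F`-vector spaces vanishing outside degrees `0 ≤ j ≤ n = 2k+1`,
with the duality conditions `dim A_j = dim C_{n-j}` and `dim B_j = dim B_{n-1-j}`,
the kernel of `i_k : B_k → C_k` has half the dimension of `B_k`. -/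
theorem stmt0 (F : Type*) [Field F] (k : ℕ)
    (A B C : ℤ → Type*)
    [∀ j, AddCommGroup (A j)] [∀ j, Module F (A j)] [∀ j, FiniteDimensional F (A j)]
    [∀ j, AddCommGroup (B j)] [∀ j, Module F (B j)] [∀ j, FiniteDimensional F (B j)]
    [∀ j, AddCommGroup (C j)] [∀ j, Module F (C j)] [∀ j, FiniteDimensional F (C j)]
    (hA : ∀ j : ℤ, (j < 0 ∨ (2 * k + 1 : ℤ) < j) → Subsingleton (A j))
    (hB : ∀ j : ℤ, (j < 0 ∨ (2 * k + 1 : ℤ) < j) → Subsingleton (B j))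
    (hC : ∀ j : ℤ, (j < 0 ∨ (2 * k + 1 : ℤ) < j) → Subsingleton (C j))
    (d : ∀ j : ℤ, A (j + 1) →ₗ[F] B j)
    (i : ∀ j : ℤ, B j →ₗ[F] C j)
    (p : ∀ j : ℤ, C j →ₗ[F] A j)
    (hexB : ∀ j : ℤ, LinearMap.range (d j) = LinearMap.ker (i j))
    (hexC : ∀ j : ℤ, LinearMap.range (i j) = LinearMap.ker (p j))
    (hexA : ∀ j : ℤ, LinearMap.range (p (j + 1)) = LinearMap.ker (d j))
    (hdualAC : ∀ j : ℤ,
      Module.finrank F (A j) = Module.finrank F (C (2 * k + 1 - j)))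
    (hdualB : ∀ j : ℤ,
      Module.finrank F (B j) = Module.finrank F (B (2 * k - j))) :
    2 * Module.finrank F (LinearMap.ker (i k)) = Module.finrank F (B (k : ℤ)) :=
  stmt0_general F k A B C hA hB d i p hexB hexC hexA hdualAC hdualB
end

section
/- Let A and B be finitely generated free ℤ-modules and let α, β : A → B be ℤ-linear maps such that α is an isomorphism. Then the ℂ(t)-linear map id ⊗ α − t·(id ⊗ β) : ℂ(t) ⊗_ℤ A → ℂ(t) ⊗_ℤ B is an isomorphism of ℂ(t)-vector spaces. -/
/-!
Since `α` is invertible, `id ⊗ α - t (id ⊗ β) = (id ⊗ α) ∘ (1 - t (id ⊗ φ))` with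
`φ = α⁻¹ ∘ β`. In a `ℤ`-basis of `A`, the determinant of `1 - t (id ⊗ φ)` is the reversed
characteristic polynomial of the integer matrix of `φ` evaluated at `t`; this polynomial has
constant term `1`, so it is nonzero, and `t` is transcendental over `ℤ`.
-/

open Polynomial TensorProduct

theorem Matrix.charpolyRev_ne_zero {R n : Type*} [CommRing R] [Nontrivial R] [Fintype n]
    [DecidableEq n] (N : Matrix n n R) : N.charpolyRev ≠ 0 := fun h ↦ by
  simpa [h] using N.eval_charpolyRev

theorem Matrix.det_one_sub_smul_map_algebraMap {R K n : Type*} [CommRing R] [CommRing K]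
    [Algebra R K] [Fintype n] [DecidableEq n] (N : Matrix n n R) (x : K) :
    (1 - x • N.map (algebraMap R K)).det = aeval x N.charpolyRev := by
  rw [charpolyRev, AlgHom.map_det]
  congr 1
  ext i j
  simp [Matrix.one_apply, apply_ite, Algebra.commutes]

namespace LinearMap

variable {R K M : Type*} [CommRing R] [Field K] [Algebra R K] [AddCommGroup M] [Module R M]

theorem toMatrix_one_sub_smul_baseChange {ι : Type*} [Fintype ι] [DecidableEq ι]
    (b : Module.Basis ι R M) (φ : M →ₗ[R] M) (x : K) :
    toMatrix (Algebra.TensorProduct.basis K b) (Algebra.TensorProduct.basis K b)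
        (1 - x • φ.baseChange K) = 1 - x • (toMatrix b b φ).map (algebraMap R K) := by
  -- with the arguments left implicit, `map_sub` picks the wrong `AddCommGroup` on endomorphisms
  rw [map_sub (toMatrix _ _) 1 (x • φ.baseChange K), toMatrix_one, map_smul, toMatrix_baseChange]

theorem bijective_one_sub_smul_baseChange [Module.Free R M] [Module.Finite R M]
    (φ : M →ₗ[R] M) {x : K} (hx : Transcendental R x) :
    Function.Bijective (1 - x • φ.baseChange K : Module.End K (K ⊗[R] M)) := by
  classical
  have : Nontrivial R := (algebraMap R K).domain_nontrivial
  let b := Module.Free.chooseBasis R M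
  have hdet : LinearMap.det (1 - x • φ.baseChange K : Module.End K (K ⊗[R] M)) =
      aeval x (toMatrix b b φ).charpolyRev := by
    rw [← det_toMatrix (Algebra.TensorProduct.basis K b), toMatrix_one_sub_smul_baseChange,
      Matrix.det_one_sub_smul_map_algebraMap]
  rw [← Module.End.isUnit_iff, isUnit_iff_isUnit_det, hdet, isUnit_iff_ne_zero]
  exact fun h ↦ (toMatrix b b φ).charpolyRev_ne_zero (transcendental_iff.mp hx _ h)

end LinearMap

theorem stmt3_general (A B : Type*)
    [AddCommGroup A] [Module.Free ℤ A] [Module.Finite ℤ A]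
    [AddCommGroup B]
    (α β : A →ₗ[ℤ] B) (hα : Function.Bijective α) :
    Function.Bijective
      (LinearMap.baseChange (RatFunc ℂ) α
        - (RatFunc.X : RatFunc ℂ) • LinearMap.baseChange (RatFunc ℂ) β) := by
  let e := LinearEquiv.ofBijective α hα
  let φ := e.symm.toLinearMap ∘ₗ β
  have hX : Transcendental ℤ (RatFunc.X : RatFunc ℂ) :=
    (RatFunc.transcendental_X (K := ℂ)).restrictScalars (algebraMap ℤ ℂ).injective_int
  have hβ : β = α ∘ₗ φ := by ext; simp [φ, e]
  have hfactor : α.baseChange (RatFunc ℂ) - (RatFunc.X : RatFunc ℂ) • β.baseChange (RatFunc ℂ) =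
      α.baseChange (RatFunc ℂ) ∘ₗ (1 - (RatFunc.X : RatFunc ℂ) • φ.baseChange (RatFunc ℂ)) := by
    rw [hβ, LinearMap.baseChange_comp, LinearMap.comp_sub, LinearMap.comp_smul,
      Module.End.one_eq_id, LinearMap.comp_id]
  rw [hfactor]
  exact (e.baseChange ℤ (RatFunc ℂ) A B).bijective.comp
    (LinearMap.bijective_one_sub_smul_baseChange φ hX)

/-- If `A`, `B` are finitely generated free `ℤ`-modules and `α, β : A → B` are
`ℤ`-linear with `α` an isomorphism, then `id ⊗ α - t·(id ⊗ β)` is an isomorphism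
of `ℂ(t)`-vector spaces `ℂ(t) ⊗_ℤ A → ℂ(t) ⊗_ℤ B`. -/
theorem stmt3 (A B : Type*)
    [AddCommGroup A] [Module.Free ℤ A] [Module.Finite ℤ A]
    [AddCommGroup B] [Module.Free ℤ B] [Module.Finite ℤ B]
    (α β : A →ₗ[ℤ] B) (hα : Function.Bijective α) :
    Function.Bijective
      (LinearMap.baseChange (RatFunc ℂ) α
        - (RatFunc.X : RatFunc ℂ) • LinearMap.baseChange (RatFunc ℂ) β) :=
  stmt3_general A B α β hα
end
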